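/- (Deterministic core of the PER-ETD(0) bias bound, Proposition 1) Let P be an N×N row-stochastic matrix, γ, χ ∈ (0,1) with γ ≠ χ, C_M ≥ 0, and b ≥ 1 an integer. Let d, d₀, d₁, …, d_b ∈ ℝ^N be probability vectors with ‖d − d_τ‖₁ ≤ C_M χ^τ for τ = 1, …, b. Let f ∈ ℝ^N satisfy f = d + γ Pᵀ f, set f₀ = d₀, and define f_τ = d_τ + γ Pᵀ f_{τ−1} for τ = 1, …, b. Let Φ be an N×k real matrix whose rows φ(s) satisfy ‖φ(s)‖₂ ≤ B_φ, let r ∈ ℝ^N, let V ∈ ℝ^N satisfy V = r + γ P V, and let θ, θ* ∈ ℝ^k with ε = ‖Φθ* − V‖_∞. Then ‖Φᵀ diag(f − f_b) ((I − γP)Φθ − r)‖₂ ≤ C_b (B_φ ‖θ − θ*‖₂ + ε) · ξ^b, where ξ = max{γ, χ} and C_b = B_φ(1+γ)(C_M/|χ−γ| + 1 + ‖f‖₁). -/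

import Mathlib

open Matrix BigOperators

/-! Since `r = (I - γP)V`, the residual `g = (I - γP)Φθ - r` equals `(I - γP)(Φθ - V)`, and
`P` is an ℓ∞-contraction, so `|g| ≤ (1 + γ)(B_φ‖θ - θ*‖₂ + ε)` entrywise. The error
`e_τ = f - f_τ` satisfies `e_τ = (d - d_τ) + γPᵀe_{τ-1}`, and `Pᵀ` is an ℓ¹-contraction, so
`‖e_τ‖₁ ≤ C_M χ^τ + γ‖e_{τ-1}‖₁`; solving this recurrence gives
`‖e_b‖₁ ≤ (C_M/|χ-γ| + 1 + ‖f‖₁) ξ^b`. The vector to bound is `∑_s e_b(s) g(s) φ(s)`, and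
the triangle inequality combines the two estimates. -/

section Euclidean

variable {ι : Type*} [Fintype ι]

theorem sqrt_sum_sq_eq_norm_toLp (x : ι → ℝ) :
    √(∑ i, x i ^ 2) = ‖WithLp.toLp 2 x‖ := by
  simp [EuclideanSpace.norm_eq]

theorem abs_sum_mul_le_norm_mul_norm (x y : ι → ℝ) :
    |∑ i, x i * y i| ≤ ‖WithLp.toLp 2 x‖ * ‖WithLp.toLp 2 y‖ := by
  simpa [PiLp.inner_apply, mul_comm] using
    abs_real_inner_le_norm (WithLp.toLp 2 x : EuclideanSpace ℝ ι) (WithLp.toLp 2 y)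

end Euclidean

section Stochastic

variable {n : Type*} [Fintype n] {P : Matrix n n ℝ}

theorem sum_abs_transpose_mulVec_le (hP0 : ∀ i j, 0 ≤ P i j) (hProw : ∀ i, ∑ j, P i j = 1)
    (v : n → ℝ) : ∑ j, |(Pᵀ *ᵥ v) j| ≤ ∑ i, |v i| :=
  calc ∑ j, |(Pᵀ *ᵥ v) j| = ∑ j, |∑ i, P i j * v i| := by
        simp [mulVec, dotProduct]
    _ ≤ ∑ j, ∑ i, P i j * |v i| := by
        gcongr with j
        refine (Finset.abs_sum_le_sum_abs _ _).trans_eq (Finset.sum_congr rfl fun i _ => ?_)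
        rw [abs_mul, abs_of_nonneg (hP0 i j)]
    _ = ∑ i, |v i| := by
        rw [Finset.sum_comm]
        simp_rw [← Finset.sum_mul, hProw, one_mul]

theorem abs_mulVec_le_of_abs_le (hP0 : ∀ i j, 0 ≤ P i j) (hProw : ∀ i, ∑ j, P i j = 1)
    {v : n → ℝ} {c : ℝ} (hv : ∀ i, |v i| ≤ c) (i : n) : |(P *ᵥ v) i| ≤ c :=
  calc |(P *ᵥ v) i| = |∑ j, P i j * v j| := rfl
    _ ≤ ∑ j, P i j * c := by
        refine (Finset.abs_sum_le_sum_abs _ _).trans (Finset.sum_le_sum fun j _ => ?_)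
        rw [abs_mul, abs_of_nonneg (hP0 i j)]
        exact mul_le_mul_of_nonneg_left (hv j) (hP0 i j)
    _ = c := by rw [← Finset.sum_mul, hProw i, one_mul]

theorem abs_sub_smul_mulVec_le (hP0 : ∀ i j, 0 ≤ P i j) (hProw : ∀ i, ∑ j, P i j = 1)
    {γ : ℝ} (hγ : 0 ≤ γ) {v : n → ℝ} {c : ℝ} (hv : ∀ i, |v i| ≤ c) (i : n) :
    |(v - γ • (P *ᵥ v)) i| ≤ (1 + γ) * c :=
  calc |(v - γ • (P *ᵥ v)) i| ≤ |v i| + γ * |(P *ᵥ v) i| := by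
        simpa [abs_mul, abs_of_nonneg hγ] using abs_sub (v i) (γ * (P *ᵥ v) i)
    _ ≤ c + γ * c := by gcongr; exacts [hv i, abs_mulVec_le_of_abs_le hP0 hProw hv i]
    _ = (1 + γ) * c := by ring

theorem sum_abs_sub_le_of_eq_add_smul_transpose_mulVec (hP0 : ∀ i j, 0 ≤ P i j)
    (hProw : ∀ i, ∑ j, P i j = 1) {γ : ℝ} (hγ : 0 ≤ γ) {d d' f f' F F' : n → ℝ}
    (hf : f' = d + γ • (Pᵀ *ᵥ f)) (hF : F' = d' + γ • (Pᵀ *ᵥ F)) :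
    ∑ i, |f' i - F' i| ≤ ∑ i, |d i - d' i| + γ * ∑ i, |f i - F i| := by
  have hdiff : f' - F' = (d - d') + γ • (Pᵀ *ᵥ (f - F)) := by
    rw [hf, hF, mulVec_sub, smul_sub]; abel
  calc ∑ i, |f' i - F' i| = ∑ i, |(d - d') i + γ * (Pᵀ *ᵥ (f - F)) i| := by
        simp_rw [← Pi.sub_apply f' F', hdiff]; rfl
    _ ≤ ∑ i, (|d i - d' i| + γ * |(Pᵀ *ᵥ (f - F)) i|) := by
        gcongr with i
        simpa [abs_mul, abs_of_nonneg hγ] using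
          abs_add_le ((d - d') i) (γ * (Pᵀ *ᵥ (f - F)) i)
    _ ≤ ∑ i, |d i - d' i| + γ * ∑ i, |f i - F i| := by
        rw [Finset.sum_add_distrib, ← Finset.mul_sum]
        exact add_le_add_right
          (mul_le_mul_of_nonneg_left (sum_abs_transpose_mulVec_le hP0 hProw (f - F)) hγ) _

end Stochastic

section Recurrence

variable {γ χ : ℝ}

theorem le_of_le_pow_add_mul {a : ℕ → ℝ} {c A : ℝ} {m : ℕ} (hγ : 0 ≤ γ) (hγχ : γ ≠ χ)
    (h0 : a 0 ≤ A) (hstep : ∀ τ < m, a (τ + 1) ≤ c * χ ^ (τ + 1) + γ * a τ) :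
    a m ≤ c * χ * ((γ ^ m - χ ^ m) / (γ - χ)) + γ ^ m * A := by
  induction m with
  | zero => simpa using h0
  | succ m ih =>
    have hne : γ - χ ≠ 0 := sub_ne_zero.mpr hγχ
    calc a (m + 1) ≤ c * χ ^ (m + 1) + γ * a m := hstep m m.lt_succ_self
      _ ≤ c * χ ^ (m + 1) + γ * (c * χ * ((γ ^ m - χ ^ m) / (γ - χ)) + γ ^ m * A) := by
          gcongr; exact ih fun τ hτ => hstep τ (hτ.trans m.lt_succ_self)
      _ = c * χ * ((γ ^ (m + 1) - χ ^ (m + 1)) / (γ - χ)) + γ ^ (m + 1) * A := by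
          field_simp; ring

theorem mul_div_pow_sub_pow_le {c : ℝ} (m : ℕ) (hc : 0 ≤ c) (hγ : 0 ≤ γ) (hχ0 : 0 ≤ χ)
    (hχ1 : χ ≤ 1) :
    c * χ * ((γ ^ m - χ ^ m) / (γ - χ)) ≤ c / |χ - γ| * max γ χ ^ m := by
  have hpow : |γ ^ m - χ ^ m| ≤ max γ χ ^ m :=
    abs_sub_le_of_nonneg_of_le (pow_nonneg hγ m) (pow_le_pow_left₀ hγ (le_max_left γ χ) m)
      (pow_nonneg hχ0 m) (pow_le_pow_left₀ hχ0 (le_max_right γ χ) m)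
  calc c * χ * ((γ ^ m - χ ^ m) / (γ - χ))
      ≤ c * χ * (|γ ^ m - χ ^ m| / |χ - γ|) := by
        rw [abs_sub_comm χ, ← abs_div]; gcongr; exact le_abs_self _
    _ ≤ c * 1 * (max γ χ ^ m / |χ - γ|) := by gcongr
    _ = c / |χ - γ| * max γ χ ^ m := by ring

theorem le_mul_max_pow_of_le_pow_add_mul {a : ℕ → ℝ} {c A : ℝ} {m : ℕ} (hc : 0 ≤ c)
    (hA : 0 ≤ A) (hγ : 0 ≤ γ) (hχ0 : 0 ≤ χ) (hχ1 : χ ≤ 1) (hγχ : γ ≠ χ) (h0 : a 0 ≤ A)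
    (hstep : ∀ τ < m, a (τ + 1) ≤ c * χ ^ (τ + 1) + γ * a τ) :
    a m ≤ (c / |χ - γ| + A) * max γ χ ^ m :=
  calc a m ≤ c * χ * ((γ ^ m - χ ^ m) / (γ - χ)) + γ ^ m * A :=
        le_of_le_pow_add_mul hγ hγχ h0 hstep
    _ ≤ c / |χ - γ| * max γ χ ^ m + max γ χ ^ m * A := by
        have hpow : γ ^ m ≤ max γ χ ^ m := pow_le_pow_left₀ hγ (le_max_left γ χ) m
        have := mul_div_pow_sub_pow_le m hc hγ hχ0 hχ1
        gcongr
    _ = (c / |χ - γ| + A) * max γ χ ^ m := by ring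

end Recurrence

section Features

variable {n κ : Type*} [Fintype κ]

theorem one_sub_smul_mul_mulVec_sub_eq [Fintype n] [DecidableEq n] {P : Matrix n n ℝ}
    {γ : ℝ} {r V : n → ℝ} (hV : V = r + γ • (P *ᵥ V)) (Φ : Matrix n κ ℝ) (θ : κ → ℝ) :
    ((1 - γ • P) * Φ) *ᵥ θ - r = (Φ *ᵥ θ - V) - γ • (P *ᵥ (Φ *ᵥ θ - V)) := by
  obtain rfl : r = V - γ • (P *ᵥ V) := eq_sub_of_add_eq hV.symm
  rw [Matrix.sub_mul, Matrix.one_mul, Matrix.smul_mul, sub_mulVec, smul_mulVec,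
    ← mulVec_mulVec, mulVec_sub, smul_sub]
  abel

theorem abs_mulVec_sub_le (Φ : Matrix n κ ℝ) (θ θs : κ → ℝ) (V : n → ℝ) (s : n) :
    |(Φ *ᵥ θ - V) s| ≤
      ‖WithLp.toLp 2 (Φ s)‖ * ‖WithLp.toLp 2 (θ - θs)‖ + |(Φ *ᵥ θs - V) s| :=
  calc |(Φ *ᵥ θ - V) s| = |∑ j, Φ s j * (θ - θs) j + (Φ *ᵥ θs - V) s| := by
        simp [mulVec, dotProduct, mul_sub]
    _ ≤ _ := (abs_add_le _ _).trans (by gcongr; exact abs_sum_mul_le_norm_mul_norm _ _)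

theorem norm_toLp_transpose_mul_diagonal_mulVec_le [Fintype n] [DecidableEq n] (Φ : Matrix n κ ℝ)
    (c g : n → ℝ) {G B : ℝ} (hg : ∀ s, |g s| ≤ G) (hΦ : ∀ s, ‖WithLp.toLp 2 (Φ s)‖ ≤ B) :
    ‖WithLp.toLp 2 ((Φᵀ * diagonal c) *ᵥ g)‖ ≤ (∑ s, |c s|) * G * B := by
  have hsum : (Φᵀ * diagonal c) *ᵥ g = ∑ s, (c s * g s) • Φ s := by
    ext j
    simp [mulVec, dotProduct, Finset.sum_apply, mul_comm, mul_left_comm]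
  rw [hsum, WithLp.toLp_sum, Finset.sum_mul, Finset.sum_mul]
  refine (norm_sum_le _ _).trans (Finset.sum_le_sum fun s _ => ?_)
  rw [WithLp.toLp_smul, norm_smul, Real.norm_eq_abs, abs_mul, mul_assoc, mul_assoc]
  have hG : 0 ≤ G := (abs_nonneg _).trans (hg s)
  gcongr
  exacts [hg s, hΦ s]

end Features

theorem per_etd0_bias_bound_general (N k : ℕ) (hN : 0 < N)
    (P : Matrix (Fin N) (Fin N) ℝ)
    (hP0 : ∀ i j, 0 ≤ P i j) (hProw : ∀ i, ∑ j, P i j = 1)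
    (γ χ : ℝ) (hγ0 : 0 < γ) (hχ0 : 0 < χ) (hχ1 : χ < 1) (hγχ : γ ≠ χ)
    (CM : ℝ) (hCM : 0 ≤ CM) (b : ℕ)
    (d : Fin N → ℝ)
    (dseq : ℕ → Fin N → ℝ)
    (hdseq0 : ∀ τ, τ ≤ b → ∀ i, 0 ≤ dseq τ i)
    (hdseq1 : ∀ τ, τ ≤ b → ∑ i, dseq τ i = 1)
    (hdτ : ∀ τ, 1 ≤ τ → τ ≤ b → ∑ i, |d i - dseq τ i| ≤ CM * χ ^ τ)
    (f : Fin N → ℝ) (hf : f = d + γ • (Pᵀ *ᵥ f))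
    (F : ℕ → Fin N → ℝ) (hF0 : F 0 = dseq 0)
    (hFrec : ∀ τ, 1 ≤ τ → τ ≤ b → F τ = dseq τ + γ • (Pᵀ *ᵥ F (τ - 1)))
    (Φ : Matrix (Fin N) (Fin k) ℝ) (Bφ : ℝ)
    (hΦ : ∀ s, Real.sqrt (∑ j, (Φ s j) ^ 2) ≤ Bφ)
    (r V : Fin N → ℝ) (hV : V = r + γ • (P *ᵥ V))
    (θ θs : Fin k → ℝ) :
    Real.sqrt (∑ j, (((Φᵀ * Matrix.diagonal (fun i => f i - F b i)) *ᵥ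
        ((((1 : Matrix (Fin N) (Fin N) ℝ) - γ • P) * Φ) *ᵥ θ - r)) j) ^ 2) ≤
      (Bφ * (1 + γ) * (CM / |χ - γ| + 1 + ∑ i, |f i|)) *
        (Bφ * Real.sqrt (∑ i, (θ i - θs i) ^ 2) +
          Finset.univ.sup' ⟨⟨0, hN⟩, Finset.mem_univ _⟩
            (fun s => |(Φ *ᵥ θs) s - V s|)) *
        (max γ χ) ^ b := by
  set ε := Finset.univ.sup' ⟨⟨0, hN⟩, Finset.mem_univ _⟩ fun s => |(Φ *ᵥ θs) s - V s|
  set G := (1 + γ) * (Bφ * √(∑ i, (θ i - θs i) ^ 2) + ε)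
  have hφ : ∀ s, ‖WithLp.toLp 2 (Φ s)‖ ≤ Bφ := fun s => sqrt_sum_sq_eq_norm_toLp (Φ s) ▸ hΦ s
  have hres : ∀ s, |((((1 : Matrix (Fin N) (Fin N) ℝ) - γ • P) * Φ) *ᵥ θ - r) s| ≤ G := by
    rw [one_sub_smul_mul_mulVec_sub_eq hV]
    refine abs_sub_smul_mulVec_le hP0 hProw hγ0.le fun s => ?_
    refine (abs_mulVec_sub_le Φ θ θs V s).trans
      (add_le_add ?_ (Finset.le_sup' (fun s => |(Φ *ᵥ θs) s - V s|) (Finset.mem_univ s)))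
    rw [sqrt_sum_sq_eq_norm_toLp]
    exact mul_le_mul_of_nonneg_right (hφ s) (norm_nonneg _)
  have hl1 : ∑ i, |f i - F b i| ≤ (CM / |χ - γ| + (1 + ∑ i, |f i|)) * max γ χ ^ b := by
    refine le_mul_max_pow_of_le_pow_add_mul (a := fun τ => ∑ i, |f i - F τ i|) hCM
      (by positivity) hγ0.le hχ0.le hχ1.le hγχ ?_ fun τ hτ => ?_
    · calc ∑ i, |f i - F 0 i| ≤ ∑ i, (|f i| + dseq 0 i) := by
            gcongr with i
            rw [hF0]
            nth_rw 2 [← abs_of_nonneg (hdseq0 0 b.zero_le i)]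
            exact abs_sub (f i) (dseq 0 i)
        _ = 1 + ∑ i, |f i| := by rw [Finset.sum_add_distrib, hdseq1 0 b.zero_le, add_comm]
    · have hFτ : F (τ + 1) = dseq (τ + 1) + γ • (Pᵀ *ᵥ F τ) := hFrec (τ + 1) (by omega) hτ
      refine (sum_abs_sub_le_of_eq_add_smul_transpose_mulVec hP0 hProw hγ0.le hf hFτ).trans ?_
      gcongr
      exact hdτ (τ + 1) (by omega) hτ
  have hG : 0 ≤ G := (abs_nonneg _).trans (hres ⟨0, hN⟩)
  have hBφ : 0 ≤ Bφ := (norm_nonneg _).trans (hφ ⟨0, hN⟩)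
  rw [sqrt_sum_sq_eq_norm_toLp]
  calc _ ≤ (∑ i, |f i - F b i|) * G * Bφ :=
        norm_toLp_transpose_mul_diagonal_mulVec_le Φ _ _ hres hφ
    _ ≤ (CM / |χ - γ| + (1 + ∑ i, |f i|)) * max γ χ ^ b * G * Bφ := by gcongr
    _ = _ := by ring

/-- Deterministic core of the PER-ETD(0) bias bound, Proposition 1:
With `P` row-stochastic, `γ, χ ∈ (0,1)`, `γ ≠ χ`, `C_M ≥ 0`, `b ≥ 1`, probability
vectors `d, d₀, …, d_b` with `‖d - d_τ‖₁ ≤ C_M χ^τ` for `τ = 1, …, b`,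
`f = d + γ Pᵀ f`, `f₀ = d₀`, `f_τ = d_τ + γ Pᵀ f_{τ-1}`, a feature matrix `Φ` with
rows of Euclidean norm at most `B_φ`, `V = r + γ P V`, and `ε = ‖Φθ* - V‖_∞`:
`‖Φᵀ diag(f - f_b) ((I - γP)Φθ - r)‖₂ ≤ C_b (B_φ ‖θ - θ*‖₂ + ε) ξ^b`, where
`ξ = max γ χ` and `C_b = B_φ (1+γ) (C_M/|χ-γ| + 1 + ‖f‖₁)`. -/
theorem per_etd0_bias_bound (N k : ℕ) (hN : 0 < N)
    (P : Matrix (Fin N) (Fin N) ℝ)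
    (hP0 : ∀ i j, 0 ≤ P i j) (hProw : ∀ i, ∑ j, P i j = 1)
    (γ χ : ℝ) (hγ0 : 0 < γ) (hγ1 : γ < 1) (hχ0 : 0 < χ) (hχ1 : χ < 1) (hγχ : γ ≠ χ)
    (CM : ℝ) (hCM : 0 ≤ CM) (b : ℕ) (hb : 1 ≤ b)
    (d : Fin N → ℝ) (hd0 : ∀ i, 0 ≤ d i) (hd1 : ∑ i, d i = 1)
    (dseq : ℕ → Fin N → ℝ)
    (hdseq0 : ∀ τ, τ ≤ b → ∀ i, 0 ≤ dseq τ i)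
    (hdseq1 : ∀ τ, τ ≤ b → ∑ i, dseq τ i = 1)
    (hdτ : ∀ τ, 1 ≤ τ → τ ≤ b → ∑ i, |d i - dseq τ i| ≤ CM * χ ^ τ)
    (f : Fin N → ℝ) (hf : f = d + γ • (Pᵀ *ᵥ f))
    (F : ℕ → Fin N → ℝ) (hF0 : F 0 = dseq 0)
    (hFrec : ∀ τ, 1 ≤ τ → τ ≤ b → F τ = dseq τ + γ • (Pᵀ *ᵥ F (τ - 1)))
    (Φ : Matrix (Fin N) (Fin k) ℝ) (Bφ : ℝ)
    (hΦ : ∀ s, Real.sqrt (∑ j, (Φ s j) ^ 2) ≤ Bφ)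
    (r V : Fin N → ℝ) (hV : V = r + γ • (P *ᵥ V))
    (θ θs : Fin k → ℝ) :
    Real.sqrt (∑ j, (((Φᵀ * Matrix.diagonal (fun i => f i - F b i)) *ᵥ
        ((((1 : Matrix (Fin N) (Fin N) ℝ) - γ • P) * Φ) *ᵥ θ - r)) j) ^ 2) ≤
      (Bφ * (1 + γ) * (CM / |χ - γ| + 1 + ∑ i, |f i|)) *
        (Bφ * Real.sqrt (∑ i, (θ i - θs i) ^ 2) +
          Finset.univ.sup' ⟨⟨0, hN⟩, Finset.mem_univ _⟩
            (fun s => |(Φ *ᵥ θs) s - V s|)) *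
        (max γ χ) ^ b :=
  per_etd0_bias_bound_general N k hN P hP0 hProw γ χ hγ0 hχ0 hχ1 hγχ CM hCM b d dseq hdseq0 hdseq1
    hdτ f hf F hF0 hFrec Φ Bφ hΦ r V hV θ θs
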